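/- Equivariance of the triangle transformation under similarities: let θ denote the geometric element transformation on triangles (x₀, x₁, x₂) in ℝ² (with all vertices distinct from the centroid), and let g(x) = λ(Ax + b) be a similarity with λ > 0, A ∈ SO(2), b ∈ ℝ². Then for every admissible triangle x = (x₀, x₁, x₂), the triangle (g(x₀), g(x₁), g(x₂)) is admissible and θ(g(x₀), g(x₁), g(x₂)) = (g(θ(x)₀), g(θ(x)₁), g(θ(x)₂)). -/

import Mathlib

/-- The centroid of a triangle in the Euclidean plane. -/
noncomputable def triCentroid (x : ZMod 3 → EuclideanSpace ℝ (Fin 2)) :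
    EuclideanSpace ℝ (Fin 2) :=
  (3 : ℝ)⁻¹ • (x 0 + x 1 + x 2)

/-- The geometric element transformation on triangles in the plane:
`θ(x)ᵢ = (2/3)rᵢ(xᵢ − c) − (1/3)r_{i+1}(x_{i+1} − c) − (1/3)r_{i−1}(x_{i−1} − c) + c`
with `rᵢ = ‖x_{i−1} − c‖ / ‖xᵢ − c‖` and `c` the centroid (note `i − 2 = i + 1`
in `ZMod 3`). -/
noncomputable def triTheta (x : ZMod 3 → EuclideanSpace ℝ (Fin 2)) (i : ZMod 3) :
    EuclideanSpace ℝ (Fin 2) :=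
  (2 / 3 * (‖x (i - 1) - triCentroid x‖ / ‖x i - triCentroid x‖)) • (x i - triCentroid x)
    - (1 / 3 * (‖x i - triCentroid x‖ / ‖x (i + 1) - triCentroid x‖)) •
        (x (i + 1) - triCentroid x)
    - (1 / 3 * (‖x (i + 1) - triCentroid x‖ / ‖x (i - 1) - triCentroid x‖)) •
        (x (i - 1) - triCentroid x)
    + triCentroid x

/-!
A similarity `g` is affine, so it commutes with taking the centroid, and its linear part
scales every vector `xᵢ − c` by the same factor. Hence the ratios `rᵢ` are unchanged, and
`θ(g ∘ x)ᵢ − g(c)`, a combination of the `g(xⱼ) − g(c)` with these ratios as coefficients,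
is the image of `θ(x)ᵢ − c` under the linear part of `g`.
-/

local notation "ℝ²" => EuclideanSpace ℝ (Fin 2)

namespace AffineMap

variable (g : ℝ² →ᵃ[ℝ] ℝ²) (x : ZMod 3 → ℝ²)

theorem triCentroid_comp : triCentroid (g ∘ x) = g (triCentroid x) := by
  obtain ⟨z, hz⟩ : ∃ z, ∀ v, g v = g.linear v + z :=
    ⟨g 0, fun v => by simpa using g.map_vadd 0 v⟩
  simp only [triCentroid, Function.comp_apply, hz, map_add, map_smul]
  module

theorem comp_sub_triCentroid_comp (i : ZMod 3) :
    g (x i) - triCentroid (g ∘ x) = g.linear (x i - triCentroid x) := by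
  rw [triCentroid_comp, ← vsub_eq_sub, ← vsub_eq_sub, g.linearMap_vsub]

variable {g} {r : ℝ}

theorem norm_comp_sub_triCentroid_comp (hg : ∀ v, ‖g.linear v‖ = r * ‖v‖) (i : ZMod 3) :
    ‖g (x i) - triCentroid (g ∘ x)‖ = r * ‖x i - triCentroid x‖ := by
  rw [comp_sub_triCentroid_comp, hg]

theorem comp_ne_triCentroid_comp (hg : ∀ v, ‖g.linear v‖ = r * ‖v‖) (hr : r ≠ 0)
    {i : ZMod 3} (hi : x i ≠ triCentroid x) :
    g (x i) ≠ triCentroid (g ∘ x) := by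
  rw [← sub_ne_zero, ← norm_ne_zero_iff, norm_comp_sub_triCentroid_comp x hg]
  exact mul_ne_zero hr (norm_ne_zero_iff.mpr (sub_ne_zero.mpr hi))

theorem triTheta_comp (hg : ∀ v, ‖g.linear v‖ = r * ‖v‖) (hr : r ≠ 0) (i : ZMod 3) :
    triTheta (g ∘ x) i = g (triTheta x i) := by
  have ratio (a d : ℝ) : r * a / (r * d) = a / d := mul_div_mul_left a d hr
  have hsplit : triTheta x i = (triTheta x i - triCentroid x) + triCentroid x :=
    (sub_add_cancel _ _).symm
  rw [hsplit, ← vadd_eq_add, g.map_vadd, vadd_eq_add, ← triCentroid_comp]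
  simp only [triTheta, Function.comp_apply, comp_sub_triCentroid_comp, hg, ratio,
    add_sub_cancel_right]
  simp only [map_sub, map_smul]

end AffineMap

theorem triangle_transformation_similarity_equivariant_general
    (A : EuclideanSpace ℝ (Fin 2) →ₗ[ℝ] EuclideanSpace ℝ (Fin 2))
    (hA : ∀ v, ‖A v‖ = ‖v‖)
    (b : EuclideanSpace ℝ (Fin 2)) (l : ℝ) (hl : 0 < l)
    (x : ZMod 3 → EuclideanSpace ℝ (Fin 2))
    (hadm : ∀ i, x i ≠ triCentroid x) :
    (∀ i, (fun j => l • (A (x j) + b)) i ≠ triCentroid (fun j => l • (A (x j) + b))) ∧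
      (∀ i, triTheta (fun j => l • (A (x j) + b)) i = l • (A (triTheta x i) + b)) := by
  let g : ℝ² →ᵃ[ℝ] ℝ² :=
    { toFun := fun v => l • (A v + b)
      linear := l • A
      map_vadd' := fun p v => by simp only [vadd_eq_add, map_add, LinearMap.smul_apply]; module }
  have hg : ∀ v, ‖g.linear v‖ = |l| * ‖v‖ := fun v => by
    simp only [g, LinearMap.smul_apply, norm_smul, hA, Real.norm_eq_abs]
  have hl0 : |l| ≠ 0 := abs_ne_zero.mpr hl.ne'
  have hgx : (fun j => l • (A (x j) + b)) = g ∘ x := rfl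
  rw [hgx]
  exact ⟨fun i => AffineMap.comp_ne_triCentroid_comp x hg hl0 (hadm i),
    AffineMap.triTheta_comp x hg hl0⟩

/-- The triangle transformation is equivariant under the similarity group of the
plane: for a similarity `g(v) = λ(A v + b)` (with `λ > 0`, `A ∈ SO(2)`, `b ∈ ℝ²`)
and any admissible triangle `x`, the triangle `g ∘ x` is admissible and
`θ(g ∘ x) = g ∘ θ(x)`. -/
theorem triangle_transformation_similarity_equivariant
    (A : EuclideanSpace ℝ (Fin 2) →ₗ[ℝ] EuclideanSpace ℝ (Fin 2))
    (hA : ∀ v, ‖A v‖ = ‖v‖) (hdet : LinearMap.det A = 1)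
    (b : EuclideanSpace ℝ (Fin 2)) (l : ℝ) (hl : 0 < l)
    (x : ZMod 3 → EuclideanSpace ℝ (Fin 2))
    (hadm : ∀ i, x i ≠ triCentroid x) :
    (∀ i, (fun j => l • (A (x j) + b)) i ≠ triCentroid (fun j => l • (A (x j) + b))) ∧
      (∀ i, triTheta (fun j => l • (A (x j) + b)) i = l • (A (triTheta x i) + b)) :=
  triangle_transformation_similarity_equivariant_general A hA b l hl x hadm
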